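/- Let the prior be a full exponential family p(θ|α) = exp(αᵀθ − A(α))h(θ) with natural parameter α and log-normalizer A. With log-perturbation ρ(θ,α) = log p(x|θ) + log p(θ|α) − log p(x|θ) − log p(θ|α₀) = (α−α₀)ᵀθ − A(α) + A(α₀), the mixed derivative f_{αη} = ∂/∂ηᵀ E_{q(θ;η)}[∂ρ/∂α|_{α₀}] equals g_η = ∂/∂ηᵀ E_{q(θ;η)}[θ], since ∂A(α)/∂α|_{α₀} does not depend on η. Hence the variational prior sensitivity S^q_{α₀} = g_η H⁻¹ f_{αη}ᵀ coincides with the linear response covariance Cov^{LR}(θ) = g_η H⁻¹ g_ηᵀ. -/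

import Mathlib

open Matrix

theorem hasFDerivAt_sub_dotProduct {ι : Type*} [Fintype ι] (α₀ c : ι → ℝ) :
    HasFDerivAt (fun α : ι → ℝ => (fun k => α k - α₀ k) ⬝ᵥ c)
      (LinearMap.toContinuousLinearMap ((dotProductBilin ℝ ℝ).flip c)) α₀ :=
  ((LinearMap.toContinuousLinearMap ((dotProductBilin ℝ ℝ).flip c)).hasFDerivAt.sub_const
    (α₀ ⬝ᵥ c)).congr_of_eventuallyEq <| .of_forall fun α => sub_dotProduct α α₀ c

theorem fderiv_expFamily_perturbation_apply {ι : Type*} [Fintype ι] (α₀ c v : ι → ℝ)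
    (A : (ι → ℝ) → ℝ) (hA : DifferentiableAt ℝ A α₀) :
    fderiv ℝ (fun α => (fun k => α k - α₀ k) ⬝ᵥ c - A α + A α₀) α₀ v =
      v ⬝ᵥ c - fderiv ℝ A α₀ v := by
  rw [(((hasFDerivAt_sub_dotProduct α₀ c).fun_sub hA.hasFDerivAt).add_const (A α₀)).fderiv]
  simp [dotProductBilin]

theorem prior_sensitivity_equals_lrvb_covariance_general
    {K Kη : ℕ}
    (Eq : (Fin Kη → ℝ) → (Fin K → ℝ))  -- `η ↦ E_{q(θ;η)}[θ]`
    (η₀ : Fin Kη → ℝ) (α₀ : Fin K → ℝ)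
    (A : (Fin K → ℝ) → ℝ) (hA : DifferentiableAt ℝ A α₀)
    (H : Matrix (Fin Kη) (Fin Kη) ℝ)
    (gη : Matrix (Fin K) (Fin Kη) ℝ)
    (hgη : ∀ i j, gη i j = fderiv ℝ (fun η => Eq η i) η₀ (Pi.single j 1))
    (f : Matrix (Fin K) (Fin Kη) ℝ)
    (hf : ∀ i j, f i j =
      fderiv ℝ (fun η =>
          fderiv ℝ (fun α => (fun k => α k - α₀ k) ⬝ᵥ Eq η - A α + A α₀)
            α₀ (Pi.single i 1))
        η₀ (Pi.single j 1)) :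
    f = gη ∧ gη * H⁻¹ * fᵀ = gη * H⁻¹ * gηᵀ := by
  have hfg : f = gη := by
    ext i j
    simp only [hf, hgη, fderiv_expFamily_perturbation_apply _ _ _ _ hA, single_one_dotProduct,
      fderiv_sub_const]
  exact ⟨hfg, by rw [hfg]⟩

/-- With an exponential-family prior perturbation
`ρ(θ,α) = (α−α₀)ᵀθ − A(α) + A(α₀)` (natural sufficient statistic `θ`), the
mixed derivative `f_{αη}` of `η ↦ E_{q(θ;η)}[∂ρ/∂α|_{α₀}]` equals
`g_η = ∂E_{q(θ;η)}[θ]/∂ηᵀ`, so the variational prior sensitivity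
`g_η H⁻¹ f_{αη}ᵀ` coincides with the LRVB covariance `g_η H⁻¹ g_ηᵀ`. -/
theorem prior_sensitivity_equals_lrvb_covariance
    {K Kη : ℕ}
    (Eq : (Fin Kη → ℝ) → (Fin K → ℝ))  -- `η ↦ E_{q(θ;η)}[θ]`
    (η₀ : Fin Kη → ℝ) (α₀ : Fin K → ℝ)
    (A : (Fin K → ℝ) → ℝ) (hA : DifferentiableAt ℝ A α₀)
    (hEq : ∀ i, DifferentiableAt ℝ (fun η => Eq η i) η₀)
    (H : Matrix (Fin Kη) (Fin Kη) ℝ) (hH : H.PosDef)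
    (gη : Matrix (Fin K) (Fin Kη) ℝ)
    (hgη : ∀ i j, gη i j = fderiv ℝ (fun η => Eq η i) η₀ (Pi.single j 1))
    (f : Matrix (Fin K) (Fin Kη) ℝ)
    (hf : ∀ i j, f i j =
      fderiv ℝ (fun η =>
          fderiv ℝ (fun α => (fun k => α k - α₀ k) ⬝ᵥ Eq η - A α + A α₀)
            α₀ (Pi.single i 1))
        η₀ (Pi.single j 1)) :
    f = gη ∧ gη * H⁻¹ * fᵀ = gη * H⁻¹ * gηᵀ :=
  prior_sensitivity_equals_lrvb_covariance_general Eq η₀ α₀ A hA H gη hgη f hf
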